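/- Let π^E and π^β be two policies in an episodic MDP and let η ∈ [0,1]. Define the mixture state-action distribution d^mix_h(s,a) = η d^{π^E}_h(s,a) + (1−η) d^{π^β}_h(s,a), d^mix_h(s) = Σ_a d^mix_h(s,a), and the induced mixture policy π^mix_h(a|s) = d^mix_h(s,a)/d^mix_h(s) if d^mix_h(s) > 0 and 1/|A| otherwise. Then V(π^E) − V(π^mix) = (1−η)(V(π^E) − V(π^β)). -/

import Mathlib

open Finset

/-- An episodic MDP `M = (S, A, P, r, H, ρ)` with finite state space `S`, finite action
space `A`, horizon `H`, initial state distribution `ρ`, non-stationary transitions `P` and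
rewards `r` taking values in `[0,1]`.  Time steps are indexed by `0, 1, …, H-1`. -/
structure MDP (S A : Type) [Fintype S] [Fintype A] where
  H : ℕ
  ρ : S → ℝ
  P : ℕ → S → A → S → ℝ
  r : ℕ → S → A → ℝ
  ρ_nonneg : ∀ s, 0 ≤ ρ s
  ρ_sum : ∑ s, ρ s = 1
  P_nonneg : ∀ h s a s', 0 ≤ P h s a s'
  P_sum : ∀ h s a, ∑ s', P h s a s' = 1
  r_nonneg : ∀ h s a, 0 ≤ r h s a
  r_le_one : ∀ h s a, r h s a ≤ 1

variable {S A : Type} [Fintype S] [Fintype A] [DecidableEq S] [DecidableEq A]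

/-- A (time-dependent, stochastic) policy: `π h s a` is the probability of action `a`
at state `s` in step `h`. -/
def IsPolicy (π : ℕ → S → A → ℝ) : Prop :=
  (∀ h s a, 0 ≤ π h s a) ∧ (∀ h s, ∑ a, π h s a = 1)

/-- A deterministic policy: at each step and state it puts all mass on a single action. -/
def IsDetPolicy (π : ℕ → S → A → ℝ) : Prop :=
  ∃ f : ℕ → S → A, ∀ h s a, π h s a = if a = f h s then 1 else 0

/-- The state distribution `d^π_h(s)` of policy `π` at step `h`. -/
noncomputable def dState (M : MDP S A) (π : ℕ → S → A → ℝ) : ℕ → S → ℝ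
  | 0 => M.ρ
  | h + 1 => fun s' => ∑ s, ∑ a, dState M π h s * π h s a * M.P h s a s'

/-- The state-action distribution `d^π_h(s, a)` of policy `π` at step `h`. -/
noncomputable def dSA (M : MDP S A) (π : ℕ → S → A → ℝ) (h : ℕ) (s : S) (a : A) : ℝ :=
  dState M π h s * π h s a

/-- The policy value `V(π) = E[Σ_{h} r_h(s_h, a_h)] = Σ_h Σ_{(s,a)} d^π_h(s,a) r_h(s,a)`. -/
noncomputable def value (M : MDP S A) (π : ℕ → S → A → ℝ) : ℝ :=
  ∑ h ∈ Finset.range M.H, ∑ s, ∑ a, dSA M π h s a * M.r h s a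

/-- Probability that rolling out policy `π` in MDP `M` produces trajectory `tr`. -/
noncomputable def trajProb (M : MDP S A) (π : ℕ → S → A → ℝ) (tr : Fin M.H → S × A) : ℝ :=
  ∏ h : Fin M.H,
    ((if (h : ℕ) = 0 then M.ρ (tr h).1 else 1) * π h (tr h).1 (tr h).2 *
      (if hh : (h : ℕ) + 1 < M.H then M.P h (tr h).1 (tr h).2 (tr ⟨(h : ℕ) + 1, hh⟩).1 else 1))

/-- A labeled dataset of `N` trajectories of length `H`; the Boolean label records whether
the trajectory was generated by the expert (`true`) or by the behavior policy (`false`).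
The expert dataset `D^E` is the sub-dataset labeled `true`, the supplementary dataset `D^S`
is the sub-dataset labeled `false`, and the union dataset `D^U` is the whole dataset. -/
abbrev Dataset (S A : Type) (H N : ℕ) := Fin N → (Fin H → S × A) × Bool

/-- Probability of observing the labeled dataset `D` under Assumption 1 (each of the `N`
trajectories is independently rolled out from the expert `πE` with probability `η` and
from the behavior policy `πβ` with probability `1 - η`). -/
noncomputable def datasetProb (M : MDP S A) (πE πβ : ℕ → S → A → ℝ) (η : ℝ) {N : ℕ}
    (D : Dataset S A M.H N) : ℝ :=
  ∏ i, (if (D i).2 then η * trajProb M πE (D i).1 else (1 - η) * trajProb M πβ (D i).1)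

/-- Expectation of `f` over the randomness of the dataset collection (Assumption 1). -/
noncomputable def expect (M : MDP S A) (πE πβ : ℕ → S → A → ℝ) (η : ℝ) (N : ℕ)
    (f : Dataset S A M.H N → ℝ) : ℝ :=
  ∑ D : Dataset S A M.H N, datasetProb M πE πβ η D * f D

/-- Whether the step-`h` state-action pair of trajectory `tr` equals `(s, a)`. -/
def hit {H : ℕ} (tr : Fin H → S × A) (h : ℕ) (s : S) (a : A) : Bool :=
  if hh : h < H then decide (tr ⟨h, hh⟩ = (s, a)) else false

/-- `n_h(s, a)`: the number of trajectories of `D` (among those whose label is selected by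
`keep`) whose step-`h` state-action pair is `(s, a)`. -/
def countSA {H N : ℕ} (D : Dataset S A H N) (keep : Bool → Bool) (h : ℕ) (s : S) (a : A) : ℕ :=
  (Finset.univ.filter fun i : Fin N => (keep (D i).2 && hit (D i).1 h s a) = true).card

/-- The behavioral cloning policy determined by counts `n`:
`π_h(a|s) = n_h(s,a)/n_h(s)` if `n_h(s) > 0` and `1/|A|` otherwise. -/
noncomputable def bcFromCounts (n : ℕ → S → A → ℕ) : ℕ → S → A → ℝ := fun h s a =>
  if 0 < ∑ a', n h s a' then (n h s a : ℝ) / (∑ a', (n h s a' : ℝ))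
  else 1 / (Fintype.card A : ℝ)

/-- The behavioral cloning policy of the sub-dataset of `D` selected by `keep`
(`keep = fun b => b` gives BC on the expert dataset `D^E`;
 `keep = fun _ => true` gives BC on the union dataset `D^U`, i.e., NBCU). -/
noncomputable def bcPolicy {H N : ℕ} (D : Dataset S A H N) (keep : Bool → Bool) :
    ℕ → S → A → ℝ :=
  bcFromCounts (fun h s a => countSA D keep h s a)

/-! The mixture policy reproduces the mixture occupancy measure. Inductively, once the state
distribution of `π^mix` at step `h` is the marginal `d^mix_h(s)`, normalising gives
`d^{π^mix}_h(s,a) = d^mix_h(s,a)` (where `d^mix_h(s) = 0` both sides vanish, whatever the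
default `1/|A|`), and the transition step is linear in the state-action distribution. The value
is linear in it as well, so `V(π^mix) = η V(π^E) + (1 - η) V(π^β)`. -/

noncomputable def dMix (M : MDP S A) (πE πβ : ℕ → S → A → ℝ) (η : ℝ) (h : ℕ) (s : S) (a : A) :
    ℝ :=
  η * dSA M πE h s a + (1 - η) * dSA M πβ h s a

section

omit [DecidableEq S] [DecidableEq A]

theorem sum_mul_ite_div_sum {ι : Type*} [Fintype ι] {d : ι → ℝ} (hd : ∀ i, 0 ≤ d i)
    (c : ℝ) (i : ι) :
    (∑ j, d j) * (if 0 < ∑ j, d j then d i / ∑ j, d j else c) = d i := by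
  split_ifs with hpos
  · exact mul_div_cancel₀ _ hpos.ne'
  · have hzero : ∑ j, d j = 0 := le_antisymm (not_lt.mp hpos) (sum_nonneg fun j _ => hd j)
    rw [hzero, zero_mul, eq_comm]
    exact (sum_eq_zero_iff_of_nonneg fun j _ => hd j).mp hzero i (mem_univ i)

theorem dState_nonneg (M : MDP S A) {π : ℕ → S → A → ℝ} (hπ : ∀ h s a, 0 ≤ π h s a) (h : ℕ)
    (s : S) : 0 ≤ dState M π h s := by
  induction h generalizing s with
  | zero => exact M.ρ_nonneg s
  | succ h ih =>
    exact sum_nonneg fun s _ => sum_nonneg fun a _ =>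
      mul_nonneg (mul_nonneg (ih s) (hπ h s a)) (M.P_nonneg h s a _)

theorem dSA_nonneg (M : MDP S A) {π : ℕ → S → A → ℝ} (hπ : ∀ h s a, 0 ≤ π h s a) (h : ℕ)
    (s : S) (a : A) : 0 ≤ dSA M π h s a :=
  mul_nonneg (dState_nonneg M hπ h s) (hπ h s a)

theorem sum_dSA (M : MDP S A) {π : ℕ → S → A → ℝ} (hπ : ∀ h s, ∑ a, π h s a = 1) (h : ℕ)
    (s : S) : ∑ a, dSA M π h s a = dState M π h s := by
  simp only [dSA, ← mul_sum, hπ h s, mul_one]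

theorem dState_succ (M : MDP S A) (π : ℕ → S → A → ℝ) (h : ℕ) (s' : S) :
    dState M π (h + 1) s' = ∑ s, ∑ a, dSA M π h s a * M.P h s a s' :=
  rfl

theorem dSA_eq_of_normalize (M : MDP S A) {π : ℕ → S → A → ℝ} {h : ℕ} {d : S → A → ℝ}
    (hd : ∀ s a, 0 ≤ d s a) (c : ℝ)
    (hπ : ∀ s a, π h s a = if 0 < ∑ a', d s a' then d s a / ∑ a', d s a' else c)
    (hstate : ∀ s, dState M π h s = ∑ a', d s a') (s : S) (a : A) :
    dSA M π h s a = d s a := by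
  rw [dSA, hπ, hstate]
  exact sum_mul_ite_div_sum (hd s) c a

variable {M : MDP S A} {πE πβ πmix : ℕ → S → A → ℝ} {η : ℝ}

theorem dMix_nonneg (hE : IsPolicy πE) (hβ : IsPolicy πβ) (hη : η ∈ Set.Icc (0 : ℝ) 1)
    (h : ℕ) (s : S) (a : A) : 0 ≤ dMix M πE πβ η h s a :=
  add_nonneg (mul_nonneg hη.1 (dSA_nonneg M hE.1 h s a))
    (mul_nonneg (sub_nonneg.mpr hη.2) (dSA_nonneg M hβ.1 h s a))

theorem sum_dMix (hE : IsPolicy πE) (hβ : IsPolicy πβ) (h : ℕ) (s : S) :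
    ∑ a, dMix M πE πβ η h s a = η * dState M πE h s + (1 - η) * dState M πβ h s := by
  simp only [dMix, sum_add_distrib, ← mul_sum, sum_dSA M hE.2, sum_dSA M hβ.2]

variable (hE : IsPolicy πE) (hβ : IsPolicy πβ) (hη : η ∈ Set.Icc (0 : ℝ) 1)
  (hmix : ∀ h s a, πmix h s a =
    if 0 < ∑ a', dMix M πE πβ η h s a'
    then dMix M πE πβ η h s a / ∑ a', dMix M πE πβ η h s a'
    else 1 / (Fintype.card A : ℝ))
include hE hβ hη hmix

theorem dSA_mixture_of_dState_mixture {h : ℕ}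
    (hstate : ∀ s, dState M πmix h s = η * dState M πE h s + (1 - η) * dState M πβ h s) :
    ∀ s a, dSA M πmix h s a = dMix M πE πβ η h s a :=
  dSA_eq_of_normalize M (dMix_nonneg hE hβ hη h) _ (hmix h)
    fun s => (hstate s).trans (sum_dMix hE hβ h s).symm

theorem dState_mixture (h : ℕ) :
    ∀ s, dState M πmix h s = η * dState M πE h s + (1 - η) * dState M πβ h s := by
  induction h with
  | zero => intro s; simp only [dState]; ring
  | succ h ih =>
    intro s'
    simp only [dState_succ, dSA_mixture_of_dState_mixture hE hβ hη hmix ih, dMix, add_mul,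
      sum_add_distrib, mul_assoc, ← mul_sum]

theorem value_mixture : value M πmix = η * value M πE + (1 - η) * value M πβ := by
  simp only [value, dSA_mixture_of_dState_mixture hE hβ hη hmix (dState_mixture hE hβ hη hmix _),
    dMix, add_mul, sum_add_distrib, mul_assoc, ← mul_sum]

end

/-- **Mixture policy lemma (value).**
For policies `π^E, π^β` and `η ∈ [0,1]`, let
`d^mix_h(s,a) = η d^{π^E}_h(s,a) + (1−η) d^{π^β}_h(s,a)` and let `π^mix` be the induced
mixture policy (`π^mix_h(a|s) = d^mix_h(s,a)/d^mix_h(s)` if `d^mix_h(s) > 0`, and `1/|A|`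
otherwise).  Then `V(π^E) − V(π^mix) = (1−η)(V(π^E) − V(π^β))`. -/
theorem mixture_policy_value
    (M : MDP S A) (πE πβ : ℕ → S → A → ℝ) (hE : IsPolicy πE) (hβ : IsPolicy πβ)
    (η : ℝ) (hη : η ∈ Set.Icc (0 : ℝ) 1)
    (πmix : ℕ → S → A → ℝ)
    (hmix : ∀ h s a, πmix h s a =
      if 0 < ∑ a', (η * dSA M πE h s a' + (1 - η) * dSA M πβ h s a')
      then (η * dSA M πE h s a + (1 - η) * dSA M πβ h s a) /
        (∑ a', (η * dSA M πE h s a' + (1 - η) * dSA M πβ h s a'))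
      else 1 / (Fintype.card A : ℝ)) :
    value M πE - value M πmix = (1 - η) * (value M πE - value M πβ) := by
  rw [value_mixture hE hβ hη hmix]
  ring
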